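/- Let f : M → N and g : N → L be surjective continuous maps between topological spaces with N paracompact. If g is a covering map and g ∘ f is a Hurewicz fibration, then f is a Hurewicz fibration. -/
import Mathlib

open unitInterval

/-- `p : E → B` is a Hurewicz fibration: it has the homotopy lifting property
with respect to every topological space (in universe `u`). -/
def IsHurewiczFibration.{u} {E B : Type*} [TopologicalSpace E] [TopologicalSpace B]
    (p : E → B) : Prop :=
  ∀ (X : Type u) [TopologicalSpace X] (h : C(X × I, B)) (f₀ : C(X, E)),
    (∀ x : X, p (f₀ x) = h (x, 0)) →
      ∃ H : C(X × I, E), (∀ x : X, H (x, 0) = f₀ x) ∧ ∀ z : X × I, p (H z) = h z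

/-- let `f : M → N` and `g : N → L` be surjective continuous maps
with `N` paracompact. If `g` is a covering map and `g ∘ f` is a Hurewicz
fibration, then `f` is a Hurewicz fibration. -/
theorem isHurewiczFibration_of_comp.{u} {M N L : Type*} [TopologicalSpace M]
    [TopologicalSpace N] [TopologicalSpace L] {f : M → N} {g : N → L}
    (hfc : Continuous f) (hfs : Function.Surjective f)
    (hgs : Function.Surjective g) [ParacompactSpace N]
    (hg : IsCoveringMap g) (hgf : IsHurewiczFibration.{u} (g ∘ f)) :
    IsHurewiczFibration.{u} f := by
  intro X _ h f₀ h0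
  obtain ⟨H, hH0, hHlift⟩ := hgf X ⟨fun z => g (h z), hg.continuous.comp h.continuous⟩ f₀
    (fun x => by simp [Function.comp, h0 x])
  refine ⟨H, hH0, fun z => ?_⟩
  obtain ⟨x, t⟩ := z
  -- For fixed x, the paths t ↦ f (H (x,t)) and t ↦ h (x,t) are lifts of the same
  -- path through g agreeing at 0, hence equal since I is preconnected.
  have key : (fun s : I => f (H (x, s))) = fun s : I => h (x, s) := by
    apply hg.eq_of_comp_eq
      (hfc.comp (H.continuous.comp (by continuity)))
      (h.continuous.comp (by continuity))
      (funext fun s => hHlift (x, s)) 0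
    show f (H (x,0)) = h (x,0); rw [hH0 x, h0 x]
  exact congrFun key t
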